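/- arXiv:1111.6315 — 4 statements merged into one kernel-verified Lean document; each statement's English description precedes it below -/
import Mathlib

section
/- For real m with (m+1)(m−1/3)(m−2/3)(m−2) > 0, setting I² = −(1−2m+2m²)²/(4(m+1)(m−1/3)(m−2/3)(m−2)) and J = (1−2m)²/(1−2m+2m²)², one has J = (9/25)(1 + I^{−2}). -/
/-- For real `m` with `(m+1)(m−1/3)(m−2/3)(m−2) > 0`, Cartan's semi-invariant
`I² = −(1−2m+2m²)²/(4(m+1)(m−1/3)(m−2/3)(m−2))` and the absolute invariant
`J = (1−2m)²/(1−2m+2m²)²` are related by `J = (9/25)(1 + I⁻²)`. -/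
theorem cartan_invariant_relation (m : ℝ)
    (h : (m + 1) * (m - 1/3) * (m - 2/3) * (m - 2) > 0) :
    (1 - 2*m) ^ 2 / (1 - 2*m + 2*m ^ 2) ^ 2
      = (9/25) * (1 + (-(1 - 2*m + 2*m ^ 2) ^ 2 /
          (4 * ((m + 1) * (m - 1/3) * (m - 2/3) * (m - 2))))⁻¹) := by
  have hq : (1 - 2*m + 2*m ^ 2) > 0 := by nlinarith [sq_nonneg (2*m - 1)]
  have h1 : (1 - 2*m + 2*m ^ 2) ≠ 0 := ne_of_gt hq
  have h2 : (m + 1) * (m - 1/3) * (m - 2/3) * (m - 2) ≠ 0 := ne_of_gt h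
  field_simp
  ring
end

section
/- Let 𝔤 be the 13-dimensional graded Lie algebra with basis S₀,S₁,S₂, R, Y₀, Z₀,…,Z₅ and brackets [S₀,S₁]=S₀, [S₀,S₂]=2S₁, [S₁,S₂]=S₂, [S₀,Zᵢ]=Z_{i−1} (with Z_{−1}=0), [S₁,Zᵢ]=(i−5/2)Zᵢ, [S₂,Zᵢ]=(i+1)(i−5)Z_{i+1} (with Z₆=0), [Z₀,Z₅]=2Y₀, [Z₁,Z₄]=−2Y₀, [Z₂,Z₃]=2Y₀, [Y₀,R]=Y₀, [Zᵢ,R]=(1/2)Zᵢ (all others zero). Then these brackets satisfy the Jacobi identity. -/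
open scoped BigOperators

/-- Structure constants of the graded symmetry algebra of the Monge equation
`y' = (z''')²`, in the basis `S₀,S₁,S₂,R,Y₀,Z₀,…,Z₅` (indices `0,1,2,3,4,5+l`):
`[S₀,S₁]=S₀`, `[S₀,S₂]=2S₁`, `[S₁,S₂]=S₂`, `[S₀,Zᵢ]=Z_{i−1}` (`Z₋₁ = 0`),
`[S₁,Zᵢ]=(i−5/2)Zᵢ`, `[S₂,Zᵢ]=(i+1)(i−5)Z_{i+1}` (`Z₆ = 0`),
`[Z₀,Z₅]=2Y₀`, `[Z₁,Z₄]=−2Y₀`, `[Z₂,Z₃]=2Y₀`, `[Y₀,R]=Y₀`, `[Zᵢ,R]=(1/2)Zᵢ`.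
`tanakaC i j k` is the coefficient of the `k`-th basis vector in the bracket of
the `i`-th and `j`-th basis vectors. -/
noncomputable def tanakaC (i j k : ℕ) : ℝ :=
  if i = 0 ∧ j = 1 ∧ k = 0 then 1 else
  if i = 1 ∧ j = 0 ∧ k = 0 then -1 else
  if i = 0 ∧ j = 2 ∧ k = 1 then 2 else
  if i = 2 ∧ j = 0 ∧ k = 1 then -2 else
  if i = 1 ∧ j = 2 ∧ k = 2 then 1 else
  if i = 2 ∧ j = 1 ∧ k = 2 then -1 else
  if i = 0 ∧ 6 ≤ j ∧ j ≤ 10 ∧ k + 1 = j then 1 else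
  if j = 0 ∧ 6 ≤ i ∧ i ≤ 10 ∧ k + 1 = i then -1 else
  if i = 1 ∧ 5 ≤ j ∧ j ≤ 10 ∧ k = j then ((j : ℝ) - 5) - 5/2 else
  if j = 1 ∧ 5 ≤ i ∧ i ≤ 10 ∧ k = i then -(((i : ℝ) - 5) - 5/2) else
  if i = 2 ∧ 5 ≤ j ∧ j ≤ 9 ∧ k = j + 1 then (((j : ℝ) - 5) + 1) * (((j : ℝ) - 5) - 5) else
  if j = 2 ∧ 5 ≤ i ∧ i ≤ 9 ∧ k = i + 1 then -((((i : ℝ) - 5) + 1) * (((i : ℝ) - 5) - 5)) else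
  if i = 5 ∧ j = 10 ∧ k = 4 then 2 else
  if i = 10 ∧ j = 5 ∧ k = 4 then -2 else
  if i = 6 ∧ j = 9 ∧ k = 4 then -2 else
  if i = 9 ∧ j = 6 ∧ k = 4 then 2 else
  if i = 7 ∧ j = 8 ∧ k = 4 then 2 else
  if i = 8 ∧ j = 7 ∧ k = 4 then -2 else
  if i = 4 ∧ j = 3 ∧ k = 4 then 1 else
  if i = 3 ∧ j = 4 ∧ k = 4 then -1 else
  if 5 ≤ i ∧ i ≤ 10 ∧ j = 3 ∧ k = i then 1/2 else
  if 5 ≤ j ∧ j ≤ 10 ∧ i = 3 ∧ k = j then -(1/2) else 0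

/-- The bilinear bracket determined by the structure constants `tanakaC`. -/
noncomputable def tanakaBracket (x y : Fin 11 → ℝ) : Fin 11 → ℝ :=
  fun k => ∑ i, ∑ j, x i * y j * tanakaC i.val j.val k.val

/-- Integer structure constants: `czC i j k = 2 * tanakaC i j k`. -/
def czC (i j k : ℕ) : ℤ :=
  if i = 0 ∧ j = 1 ∧ k = 0 then 2 else
  if i = 1 ∧ j = 0 ∧ k = 0 then -2 else
  if i = 0 ∧ j = 2 ∧ k = 1 then 4 else
  if i = 2 ∧ j = 0 ∧ k = 1 then -4 else
  if i = 1 ∧ j = 2 ∧ k = 2 then 2 else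
  if i = 2 ∧ j = 1 ∧ k = 2 then -2 else
  if i = 0 ∧ 6 ≤ j ∧ j ≤ 10 ∧ k + 1 = j then 2 else
  if j = 0 ∧ 6 ≤ i ∧ i ≤ 10 ∧ k + 1 = i then -2 else
  if i = 1 ∧ 5 ≤ j ∧ j ≤ 10 ∧ k = j then 2 * (j : ℤ) - 15 else
  if j = 1 ∧ 5 ≤ i ∧ i ≤ 10 ∧ k = i then -(2 * (i : ℤ) - 15) else
  if i = 2 ∧ 5 ≤ j ∧ j ≤ 9 ∧ k = j + 1 then 2 * ((j : ℤ) - 4) * ((j : ℤ) - 10) else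
  if j = 2 ∧ 5 ≤ i ∧ i ≤ 9 ∧ k = i + 1 then -(2 * ((i : ℤ) - 4) * ((i : ℤ) - 10)) else
  if i = 5 ∧ j = 10 ∧ k = 4 then 4 else
  if i = 10 ∧ j = 5 ∧ k = 4 then -4 else
  if i = 6 ∧ j = 9 ∧ k = 4 then -4 else
  if i = 9 ∧ j = 6 ∧ k = 4 then 4 else
  if i = 7 ∧ j = 8 ∧ k = 4 then 4 else
  if i = 8 ∧ j = 7 ∧ k = 4 then -4 else
  if i = 4 ∧ j = 3 ∧ k = 4 then 2 else
  if i = 3 ∧ j = 4 ∧ k = 4 then -2 else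
  if 5 ≤ i ∧ i ≤ 10 ∧ j = 3 ∧ k = i then 1 else
  if 5 ≤ j ∧ j ≤ 10 ∧ i = 3 ∧ k = j then -1 else 0

def jterm (a b c k m : ℕ) : ℤ :=
  czC a b m * czC m c k + czC b c m * czC m a k + czC c a m * czC m b k

def jsum (a b c k : ℕ) : ℤ :=
  jterm a b c k 0 + jterm a b c k 1 + jterm a b c k 2 + jterm a b c k 3 +
  jterm a b c k 4 + jterm a b c k 5 + jterm a b c k 6 + jterm a b c k 7 +
  jterm a b c k 8 + jterm a b c k 9 + jterm a b c k 10

set_option maxHeartbeats 8000000 in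
theorem jacobiZ : ∀ a b c k : Fin 11, jsum a.1 b.1 c.1 k.1 = 0 := by decide

lemma ite_half (p : Prop) [Decidable p] {x r : ℝ} {y s : ℤ} (hx : x = (y : ℝ) / 2)
    (hr : r = (s : ℝ) / 2) : (if p then x else r) = (((if p then y else s) : ℤ) : ℝ) / 2 := by
  by_cases h : p <;> simp [h, hx, hr]

set_option maxHeartbeats 1600000 in
lemma tanakaC_eq (i j k : ℕ) : tanakaC i j k = (czC i j k : ℝ) / 2 := by
  unfold tanakaC czC
  iterate 22 refine ite_half _ (by push_cast; ring) ?_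
  norm_num

lemma jacobiR (a b c k : Fin 11) :
    ∑ m : Fin 11, (tanakaC a.1 b.1 m.1 * tanakaC m.1 c.1 k.1
      + tanakaC b.1 c.1 m.1 * tanakaC m.1 a.1 k.1
      + tanakaC c.1 a.1 m.1 * tanakaC m.1 b.1 k.1) = 0 := by
  have key : ∑ m : Fin 11, (jterm a.1 b.1 c.1 k.1 m.1 : ℝ) = 0 := by
    have h : ∑ m : Fin 11, (jterm a.1 b.1 c.1 k.1 m.1 : ℝ)
        = ((jsum a.1 b.1 c.1 k.1 : ℤ) : ℝ) := by
      simp [jsum, Fin.sum_univ_succ]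
      push_cast
      ring
    rw [h, jacobiZ a b c k]
    norm_num
  calc ∑ m : Fin 11, (tanakaC a.1 b.1 m.1 * tanakaC m.1 c.1 k.1
      + tanakaC b.1 c.1 m.1 * tanakaC m.1 a.1 k.1
      + tanakaC c.1 a.1 m.1 * tanakaC m.1 b.1 k.1)
      = ∑ m : Fin 11, (jterm a.1 b.1 c.1 k.1 m.1 : ℝ) / 4 := by
        refine Finset.sum_congr rfl fun m _ => ?_
        simp only [tanakaC_eq, jterm]
        push_cast
        ring
    _ = 0 := by rw [← Finset.sum_div, key]; norm_num

lemma sum3_cycle (g : Fin 11 → Fin 11 → Fin 11 → ℝ) :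
    (∑ p, ∑ q, ∑ r, g p q r) = ∑ r, ∑ p, ∑ q, g p q r := by
  rw [show (∑ p, ∑ q, ∑ r, g p q r) = ∑ p, ∑ r, ∑ q, g p q r from
    Finset.sum_congr rfl fun p _ => Finset.sum_comm]
  exact Finset.sum_comm

lemma sum3_cycle' (g : Fin 11 → Fin 11 → Fin 11 → ℝ) :
    (∑ p, ∑ q, ∑ r, g p q r) = ∑ q, ∑ r, ∑ p, g p q r :=
  (sum3_cycle g).trans (sum3_cycle fun r p q => g p q r)

lemma sum4_swap (f : Fin 11 → Fin 11 → Fin 11 → Fin 11 → ℝ) :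
    (∑ m, ∑ c, ∑ a, ∑ b, f m c a b) = ∑ a, ∑ b, ∑ c, ∑ m, f m c a b := by
  rw [show (∑ m, ∑ c, ∑ a, ∑ b, f m c a b) = ∑ m, ∑ a, ∑ b, ∑ c, f m c a b from
    Finset.sum_congr rfl fun m _ => (sum3_cycle' fun c a b => f m c a b)]
  rw [show (∑ m, ∑ a, ∑ b, ∑ c, f m c a b) = ∑ a, ∑ b, ∑ m, ∑ c, f m c a b from
    (sum3_cycle fun a b m => ∑ c, f m c a b).symm]
  exact Finset.sum_congr rfl fun a _ => Finset.sum_congr rfl fun b _ => Finset.sum_comm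

lemma expand (u v w : Fin 11 → ℝ) (k : Fin 11) :
    tanakaBracket (tanakaBracket u v) w k
      = ∑ a : Fin 11, ∑ b : Fin 11, ∑ c : Fin 11,
          u a * v b * w c * ∑ m : Fin 11, tanakaC a.1 b.1 m.1 * tanakaC m.1 c.1 k.1 := by
  simp only [tanakaBracket, Finset.sum_mul, Finset.mul_sum]
  rw [sum4_swap fun m c a b => u a * v b * tanakaC a.1 b.1 m.1 * w c * tanakaC m.1 c.1 k.1]
  refine Finset.sum_congr rfl fun a _ => Finset.sum_congr rfl fun b _ =>
    Finset.sum_congr rfl fun c _ => Finset.sum_congr rfl fun m _ => ?_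
  ring

/-- The brackets of the maximal symmetry algebra of `y' = (z''')²`
(the Tanaka algebra of the flat rank 2 distribution in `ℝ⁶` with growth vector
`(2,3,5,6)`) satisfy the Jacobi identity. -/
theorem tanaka_algebra_jacobi :
    ∀ x y z : Fin 11 → ℝ,
      tanakaBracket (tanakaBracket x y) z
        + tanakaBracket (tanakaBracket y z) x
        + tanakaBracket (tanakaBracket z x) y = 0 := by
  intro x y z
  funext k
  simp only [Pi.add_apply, Pi.zero_apply]
  rw [expand x y z k, expand y z x k, expand z x y k]
  rw [sum3_cycle fun p q r => y p * z q * x r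
    * ∑ m : Fin 11, tanakaC p.1 q.1 m.1 * tanakaC m.1 r.1 k.1]
  rw [sum3_cycle' fun p q r => z p * x q * y r
    * ∑ m : Fin 11, tanakaC p.1 q.1 m.1 * tanakaC m.1 r.1 k.1]
  simp only [← Finset.sum_add_distrib]
  refine Finset.sum_eq_zero fun a _ => Finset.sum_eq_zero fun b _ =>
    Finset.sum_eq_zero fun c _ => ?_
  have h := jacobiR a b c k
  rw [Finset.sum_add_distrib, Finset.sum_add_distrib] at h
  linear_combination (x a * y b * z c) * h
end

section
/- In the 13-dimensional Lie algebra 𝔤 = span{S₀,S₁,S₂,R,Y₀,Z₀,…,Z₅} with the brackets of the maximal symmetry algebra of y' = (z''')², the span of {S₀,S₁,S₂} is a subalgebra isomorphic to sl₂, and span{R,Y₀,Z₀,…,Z₅} is a solvable ideal; thus 𝔤 = sl₂ ⋉ 𝔪⁸ is its Levi decomposition. -/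
open scoped BigOperators

/-- The span of the basis vectors `S₀,S₁,S₂` (indices `< 3`). -/
noncomputable def sl2Span : Submodule ℝ (Fin 11 → ℝ) :=
  Submodule.span ℝ {v | ∃ i : Fin 11, i.val < 3 ∧ v = Pi.single i 1}

/-- The span `𝔪⁸` of the basis vectors `R,Y₀,Z₀,…,Z₅` (indices `≥ 3`). -/
noncomputable def radSpan : Submodule ℝ (Fin 11 → ℝ) :=
  Submodule.span ℝ {v | ∃ i : Fin 11, 3 ≤ i.val ∧ v = Pi.single i 1}

/-- The derived series of the subspace `M` under the bracket `tanakaBracket`. -/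
noncomputable def bracketDerivedSeries (M : Submodule ℝ (Fin 11 → ℝ)) : ℕ → Submodule ℝ (Fin 11 → ℝ)
  | 0 => M
  | n + 1 => Submodule.span ℝ
      {z | ∃ x ∈ bracketDerivedSeries M n, ∃ y ∈ bracketDerivedSeries M n, z = tanakaBracket x y}


/-! Everything is read off the structure constants: a bracket of two vectors supported on index
sets `s` and `t` is supported on `u` as soon as `tanakaC i j k = 0` for all `i ∈ s`, `j ∈ t`,
`k ∉ u`. Such vanishing patterns give the closure of `span{S₀,S₁,S₂}`, the ideal property of `𝔪⁸`
and the derived series `𝔪⁸ ⊇ span{Y₀,Z₀,…,Z₅} ⊇ ℝY₀ ⊇ 0`: `R` acts diagonally, `[Zᵢ,Zⱼ] ∈ ℝY₀`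
and `Y₀` is central in `span{Y₀,Z₀,…,Z₅}`. On `span{S₀,S₁,S₂}` the map
`x ↦ (-x₁/2, x₀; -x₂, x₁/2)` turns the bracket into the matrix commutator. -/

section CoordinateSubspaces

variable {R ι : Type*} [Semiring R] [DecidableEq ι]

def coordSpan (p : ι → Prop) : Submodule R (ι → R) :=
  Submodule.span R {v | ∃ i, p i ∧ v = Pi.single i 1}

variable [Fintype ι]

theorem mem_coordSpan_iff {p : ι → Prop} {x : ι → R} :
    x ∈ coordSpan p ↔ ∀ i, ¬ p i → x i = 0 := by
  constructor
  · intro hx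
    induction hx using Submodule.span_induction with
    | mem v hv =>
      obtain ⟨j, hj, rfl⟩ := hv
      intro i hi
      exact Pi.single_eq_of_ne (by rintro rfl; exact hi hj) 1
    | zero => simp
    | add a b _ _ ha hb => intro i hi; simp [ha i hi, hb i hi]
    | smul c a _ ha => intro i hi; simp [ha i hi]
  · intro hx
    rw [pi_eq_sum_univ x]
    refine Submodule.sum_mem _ fun i _ => ?_
    by_cases hi : p i
    · exact Submodule.smul_mem _ _
        (Submodule.subset_span ⟨i, hi, by ext j; simp [Pi.single_apply, eq_comm]⟩)
    · simp [hx i hi]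

theorem isCompl_coordSpan {p q : ι → Prop} (hpq : ∀ i, q i ↔ ¬ p i) :
    IsCompl (coordSpan p : Submodule R (ι → R)) (coordSpan q) := by
  classical
  constructor
  · rw [Submodule.disjoint_def]
    intro x hp hq
    rw [mem_coordSpan_iff] at hp hq
    funext i
    by_cases hi : p i
    · exact hq i ((hpq i).not.2 (not_not.2 hi))
    · exact hp i hi
  · rw [codisjoint_iff, eq_top_iff]
    intro x _
    rw [Submodule.mem_sup]
    refine ⟨fun i => if p i then x i else 0, ?_, fun i => if p i then 0 else x i, ?_, ?_⟩
    · rw [mem_coordSpan_iff]; intro i hi; simp [hi]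
    · rw [mem_coordSpan_iff]; intro i hi; simp [(hpq i).not_left.1 hi]
    · funext i; by_cases hi : p i <;> simp [hi]

end CoordinateSubspaces

theorem sl2Span_eq_coordSpan : sl2Span = coordSpan (fun i : Fin 11 => i.val < 3) := rfl

theorem tanakaC_eq_zero_of_lt_three {i j k : ℕ} (hi : i < 3) (hj : j < 3) (hk : 3 ≤ k) :
    tanakaC i j k = 0 := by
  unfold tanakaC
  repeat rw [if_neg (by omega)]

theorem tanakaC_eq_zero_of_three_le_of_lt_three {i j k : ℕ} (hj : 3 ≤ j) (hk : k < 3) :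
    tanakaC i j k = 0 := by
  unfold tanakaC
  repeat rw [if_neg (by omega)]

theorem tanakaC_eq_zero_of_three_le {i j k : ℕ} (hi : 3 ≤ i) (hj : 3 ≤ j) (hk : k ≤ 3) :
    tanakaC i j k = 0 := by
  unfold tanakaC
  repeat rw [if_neg (by omega)]

theorem tanakaC_eq_zero_of_four_le {i j k : ℕ} (hi : 4 ≤ i) (hj : 4 ≤ j) (hk : k ≠ 4) :
    tanakaC i j k = 0 := by
  unfold tanakaC
  repeat rw [if_neg (by omega)]

theorem tanakaC_four_four (k : ℕ) : tanakaC 4 4 k = 0 := by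
  simp [tanakaC]

theorem tanakaBracket_apply_eq_zero {p q : Fin 11 → Prop} {x y : Fin 11 → ℝ} {k : Fin 11}
    (hx : x ∈ coordSpan p) (hy : y ∈ coordSpan q)
    (hC : ∀ i j : Fin 11, p i → q j → tanakaC i j k = 0) :
    tanakaBracket x y k = 0 := by
  rw [mem_coordSpan_iff] at hx hy
  refine Finset.sum_eq_zero fun i _ => Finset.sum_eq_zero fun j _ => ?_
  by_cases hi : p i
  · by_cases hj : q j
    · rw [hC i j hi hj, mul_zero]
    · rw [hy j hj, mul_zero, zero_mul]
  · rw [hx i hi, zero_mul, zero_mul]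

theorem tanakaBracket_mem_coordSpan {p q r : Fin 11 → Prop} {x y : Fin 11 → ℝ}
    (hx : x ∈ coordSpan p) (hy : y ∈ coordSpan q)
    (hC : ∀ i j k : Fin 11, p i → q j → ¬ r k → tanakaC i j k = 0) :
    tanakaBracket x y ∈ coordSpan r :=
  mem_coordSpan_iff.2 fun k hk =>
    tanakaBracket_apply_eq_zero hx hy fun i j hi hj => hC i j k hi hj hk

theorem tanakaBracket_mem_sl2Span {x y : Fin 11 → ℝ} (hx : x ∈ sl2Span) (hy : y ∈ sl2Span) :
    tanakaBracket x y ∈ sl2Span :=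
  tanakaBracket_mem_coordSpan hx hy fun _ _ _ hi hj hk =>
    tanakaC_eq_zero_of_lt_three hi hj (not_lt.1 hk)

theorem tanakaBracket_mem_radSpan (x : Fin 11 → ℝ) {y : Fin 11 → ℝ} (hy : y ∈ radSpan) :
    tanakaBracket x y ∈ radSpan :=
  tanakaBracket_mem_coordSpan (p := fun _ => True) (mem_coordSpan_iff.2 fun _ h => absurd trivial h)
    hy fun _ _ _ _ hj hk => tanakaC_eq_zero_of_three_le_of_lt_three hj (not_le.1 hk)

theorem bracketDerivedSeries_succ_le {M N : Submodule ℝ (Fin 11 → ℝ)} {n : ℕ}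
    (h : ∀ x ∈ bracketDerivedSeries M n, ∀ y ∈ bracketDerivedSeries M n, tanakaBracket x y ∈ N) :
    bracketDerivedSeries M (n + 1) ≤ N :=
  Submodule.span_le.2 fun _ ⟨x, hx, y, hy, hz⟩ => hz ▸ h x hx y hy

theorem bracketDerivedSeries_radSpan_three : bracketDerivedSeries radSpan 3 = ⊥ := by
  have h1 : bracketDerivedSeries radSpan 1 ≤ coordSpan (fun k : Fin 11 => 4 ≤ k.val) :=
    bracketDerivedSeries_succ_le fun _ hx _ hy => tanakaBracket_mem_coordSpan hx hy
      fun _ _ _ hi hj hk => tanakaC_eq_zero_of_three_le hi hj (Nat.le_of_lt_succ (not_le.1 hk))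
  have h2 : bracketDerivedSeries radSpan 2 ≤ coordSpan (fun k : Fin 11 => k.val = 4) :=
    bracketDerivedSeries_succ_le fun _ hx _ hy => tanakaBracket_mem_coordSpan (h1 hx) (h1 hy)
      fun _ _ _ hi hj hk => tanakaC_eq_zero_of_four_le hi hj hk
  refine le_bot_iff.1 <| bracketDerivedSeries_succ_le fun _ hx _ hy =>
    (Submodule.mem_bot ℝ).2 <| funext fun k => tanakaBracket_apply_eq_zero (h2 hx) (h2 hy) ?_
  intro i j hi hj
  rw [hi, hj]
  exact tanakaC_four_four k

theorem tanakaBracket_of_mem_sl2Span {x y : Fin 11 → ℝ} (hx : x ∈ sl2Span) (hy : y ∈ sl2Span) :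
    tanakaBracket x y 0 = x 0 * y 1 - x 1 * y 0 ∧
    tanakaBracket x y 1 = 2 * (x 0 * y 2 - x 2 * y 0) ∧
    tanakaBracket x y 2 = x 1 * y 2 - x 2 * y 1 := by
  rw [sl2Span_eq_coordSpan, mem_coordSpan_iff] at hx hy
  refine ⟨?_, ?_, ?_⟩ <;>
    simp [tanakaBracket, Fin.sum_univ_succ, hx, hy, tanakaC] <;>
    ring

/-- In the standard basis `e, h, f` of `sl₂`: `S₀ ↦ e`, `S₁ ↦ -h/2`, `S₂ ↦ -f`. -/
noncomputable def sl2Map : (Fin 11 → ℝ) →ₗ[ℝ] Matrix (Fin 2) (Fin 2) ℝ where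
  toFun x := !![-(x 1) / 2, x 0; -(x 2), x 1 / 2]
  map_add' x y := by ext i j; fin_cases i <;> fin_cases j <;> simp <;> ring
  map_smul' c x := by ext i j; fin_cases i <;> fin_cases j <;> simp <;> ring

theorem sl2Map_apply (x : Fin 11 → ℝ) : sl2Map x = !![-(x 1) / 2, x 0; -(x 2), x 1 / 2] := rfl

theorem injOn_sl2Map : Set.InjOn sl2Map sl2Span := by
  intro x hx y hy hxy
  rw [SetLike.mem_coe, sl2Span_eq_coordSpan, mem_coordSpan_iff] at hx hy
  have h0 := congr_fun₂ hxy 0 0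
  have h1 := congr_fun₂ hxy 0 1
  have h2 := congr_fun₂ hxy 1 0
  simp only [sl2Map_apply, Matrix.of_apply, Matrix.cons_val', Matrix.cons_val_zero,
    Matrix.cons_val_one, Matrix.empty_val', Matrix.cons_val_fin_one, neg_inj] at h0 h1 h2
  funext k
  by_cases hk : k.val < 3
  · obtain rfl | rfl | rfl : k = 0 ∨ k = 1 ∨ k = 2 := by omega
    all_goals linarith
  · rw [hx k hk, hy k hk]

theorem sl2Map_image_sl2Span : sl2Map '' sl2Span = {A | A.trace = 0} := by
  ext A
  constructor
  · rintro ⟨x, -, rfl⟩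
    simp [sl2Map_apply, Matrix.trace_fin_two, neg_div]
  · intro hA
    have h11 : A 1 1 = -A 0 0 := by
      rw [Set.mem_ofPred_eq, Matrix.trace_fin_two] at hA
      linarith
    refine ⟨Pi.single 0 (A 0 1) + Pi.single 1 (-2 * A 0 0) + Pi.single 2 (-A 1 0), ?_, ?_⟩
    · rw [SetLike.mem_coe, sl2Span_eq_coordSpan, mem_coordSpan_iff]
      intro k hk
      obtain ⟨h0, h1, h2⟩ : k ≠ 0 ∧ k ≠ 1 ∧ k ≠ 2 := by omega
      simp [h0, h1, h2]
    · ext i j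
      fin_cases i <;> fin_cases j <;> simp [sl2Map_apply, h11, neg_div]

theorem sl2Map_tanakaBracket {x y : Fin 11 → ℝ} (hx : x ∈ sl2Span) (hy : y ∈ sl2Span) :
    sl2Map (tanakaBracket x y) = sl2Map x * sl2Map y - sl2Map y * sl2Map x := by
  obtain ⟨h0, h1, h2⟩ := tanakaBracket_of_mem_sl2Span hx hy
  ext i j
  fin_cases i <;> fin_cases j <;> simp [sl2Map_apply, h0, h1, h2] <;> ring

/-- In the symmetry algebra of `y' = (z''')²`, the span of `S₀,S₁,S₂` is a
subalgebra isomorphic to `sl₂` (realized as traceless 2×2 real matrices), and the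
span `𝔪⁸` of `R,Y₀,Z₀,…,Z₅` is a solvable ideal; thus `𝔤 = sl₂ ⋉ 𝔪⁸` is the
Levi decomposition. -/
theorem tanaka_levi_decomposition :
    (∀ x ∈ sl2Span, ∀ y ∈ sl2Span, tanakaBracket x y ∈ sl2Span) ∧
    (∃ f : (Fin 11 → ℝ) →ₗ[ℝ] Matrix (Fin 2) (Fin 2) ℝ,
      Set.InjOn f (sl2Span : Set (Fin 11 → ℝ)) ∧
      f '' (sl2Span : Set (Fin 11 → ℝ)) = {A | A.trace = 0} ∧
      ∀ x ∈ sl2Span, ∀ y ∈ sl2Span,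
        f (tanakaBracket x y) = f x * f y - f y * f x) ∧
    (∀ x : Fin 11 → ℝ, ∀ y ∈ radSpan, tanakaBracket x y ∈ radSpan) ∧
    (∃ N : ℕ, bracketDerivedSeries radSpan N = ⊥) ∧
    sl2Span ⊔ radSpan = ⊤ ∧ sl2Span ⊓ radSpan = ⊥ := by
  have hcompl : IsCompl sl2Span radSpan := isCompl_coordSpan fun _ => not_lt.symm
  exact ⟨fun _ hx _ hy => tanakaBracket_mem_sl2Span hx hy,
    ⟨sl2Map, injOn_sl2Map, sl2Map_image_sl2Span, fun _ hx _ hy => sl2Map_tanakaBracket hx hy⟩,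
    fun x _ hy => tanakaBracket_mem_radSpan x hy, ⟨3, bracketDerivedSeries_radSpan_three⟩,
    hcompl.sup_eq_top, hcompl.inf_eq_bot⟩
end

section
/- Let 𝔥 be a Lie algebra with basis S₀,S₁,S₂,Y₀,Z₀,…,Z₅ such that span{S₀,S₁,S₂} is sl₂ acting on span{Z₀,…,Z₅} as S⁵V and on Y₀ trivially, with brackets [Zᵢ,Zⱼ] = λ_{ij}Y₀ and [Zᵢ,Y₀] = cZᵢ, and suppose [S₁,Zᵢ]=(i−5/2)Zᵢ, [S₀,Zᵢ]=Z_{i−1}, and λ_{0,5} ≠ 0. Then the Jacobi identity forces λ_{ij} = 0 unless i+j = 5, λ_{i,5−i} = (−1)ⁱ λ_{0,5}, and c = 0. -/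
/-- Rigidity computation for the 10-dimensional subalgebra `sl₂ ⋉ (S⁵V ⊕ ε)` of the
symmetry algebra of `y' = (z''')²`.  Let `𝔥` be a Lie algebra containing linearly
independent elements `Z₀,…,Z₅`, a nonzero `Y₀` and elements `S₀,S₁` with
`[S₁,Zᵢ] = (i−5/2)Zᵢ`, `[S₀,Zᵢ] = Z_{i−1}` (`Z₋₁ = 0`), `S₀,S₁` acting trivially on
`Y₀`, `[Zᵢ,Zⱼ] = λᵢⱼ Y₀`, `[Zᵢ,Y₀] = c Zᵢ`, and `λ₀₅ ≠ 0`.  Then the Jacobi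
identity forces `λᵢⱼ = 0` unless `i+j = 5`, `λ_{i,5−i} = (−1)ⁱ λ₀₅`, and `c = 0`. -/
theorem sl2_module_bracket_rigidity {L : Type*} [LieRing L] [LieAlgebra ℝ L]
    (S₀ S₁ Y₀ : L) (Z : Fin 6 → L) (lam : Fin 6 → Fin 6 → ℝ) (c : ℝ)
    (hZind : LinearIndependent ℝ Z) (hY₀ : Y₀ ≠ 0)
    (hS₁Z : ∀ i : Fin 6, ⁅S₁, Z i⁆ = ((i : ℝ) - 5/2) • Z i)
    (hS₀Z0 : ⁅S₀, Z 0⁆ = 0)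
    (hS₀Z : ∀ i : Fin 6, ∀ h : (i : ℕ) + 1 < 6, ⁅S₀, Z ⟨(i : ℕ) + 1, h⟩⁆ = Z i)
    (hS₀Y : ⁅S₀, Y₀⁆ = 0) (hS₁Y : ⁅S₁, Y₀⁆ = 0)
    (hZZ : ∀ i j : Fin 6, ⁅Z i, Z j⁆ = lam i j • Y₀)
    (hZY : ∀ i : Fin 6, ⁅Z i, Y₀⁆ = c • Z i)
    (hlam : lam 0 5 ≠ 0) :
    (∀ i j : Fin 6, (i : ℕ) + (j : ℕ) ≠ 5 → lam i j = 0) ∧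
    (∀ i j : Fin 6, (i : ℕ) + (j : ℕ) = 5 → lam i j = (-1) ^ (i : ℕ) * lam 0 5) ∧
    c = 0 := by
  have key : ∀ r : ℝ, r • Y₀ = 0 → r = 0 := by
    intro r h
    rcases smul_eq_zero.mp h with h | h
    · exact h
    · exact absurd h hY₀
  -- antisymmetry of lam
  have hanti : ∀ i j : Fin 6, lam j i = - lam i j := by
    intro i j
    have h : ⁅Z j, Z i⁆ = -⁅Z i, Z j⁆ := (lie_skew (Z j) (Z i)).symm ▸ rfl
    rw [hZZ j i, hZZ i j] at h
    have : (lam j i + lam i j) • Y₀ = 0 := by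
      rw [add_smul, h]; abel
    linarith [key _ this]
  -- ad S₁ relation : (i + j - 5) * lam i j = 0
  have hA : ∀ i j : Fin 6, (((i : ℕ) : ℝ) + ((j : ℕ) : ℝ) - 5) * lam i j = 0 := by
    intro i j
    have h := leibniz_lie S₁ (Z i) (Z j)
    rw [hZZ i j, lie_smul, hS₁Y, smul_zero, hS₁Z i, hS₁Z j, smul_lie, lie_smul,
      hZZ i j, smul_smul, smul_smul, ← add_smul] at h
    have h2 := key _ h.symm
    nlinarith [h2]
  -- part 1
  have part1 : ∀ i j : Fin 6, (i : ℕ) + (j : ℕ) ≠ 5 → lam i j = 0 := by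
    intro i j hij
    rcases mul_eq_zero.mp (hA i j) with h | h
    · exfalso
      apply hij
      have : (((i : ℕ) + (j : ℕ) : ℕ) : ℝ) = ((5 : ℕ) : ℝ) := by push_cast; linarith
      exact_mod_cast this
    · exact h
  -- ad S₀ relation
  have hB : ∀ i j : Fin 6, ∀ hi : (i : ℕ) + 1 < 6, ∀ hj : (j : ℕ) + 1 < 6,
      lam i ⟨(j : ℕ) + 1, hj⟩ + lam ⟨(i : ℕ) + 1, hi⟩ j = 0 := by
    intro i j hi hj
    have h := leibniz_lie S₀ (Z ⟨(i : ℕ) + 1, hi⟩) (Z ⟨(j : ℕ) + 1, hj⟩)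
    rw [hZZ, lie_smul, hS₀Y, smul_zero, hS₀Z i hi, hS₀Z j hj, hZZ, hZZ,
      ← add_smul] at h
    exact key _ h.symm
  have e14 : lam 1 4 = - lam 0 5 := by
    have h := hB 0 4 (by decide) (by decide)
    have h5 : (⟨(((4:Fin 6) : ℕ)) + 1, by decide⟩ : Fin 6) = 5 := rfl
    have h1 : (⟨(((0:Fin 6) : ℕ)) + 1, by decide⟩ : Fin 6) = 1 := rfl
    rw [h5, h1] at h
    linarith
  have e23 : lam 2 3 = lam 0 5 := by
    have h := hB 1 3 (by decide) (by decide)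
    have h4 : (⟨(((3:Fin 6) : ℕ)) + 1, by decide⟩ : Fin 6) = 4 := rfl
    have h2 : (⟨(((1:Fin 6) : ℕ)) + 1, by decide⟩ : Fin 6) = 2 := rfl
    rw [h4, h2] at h
    linarith [e14]
  have e32 : lam 3 2 = - lam 0 5 := by
    have h := hanti 2 3
    linarith [e23]
  have e41 : lam 4 1 = lam 0 5 := by
    have h := hanti 1 4
    linarith [e14]
  have e50 : lam 5 0 = - lam 0 5 := by
    have h := hanti 0 5
    linarith
  refine ⟨part1, ?_, ?_⟩
  · intro i j hij
    have hcases : (i = 0 ∧ j = 5) ∨ (i = 1 ∧ j = 4) ∨ (i = 2 ∧ j = 3) ∨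
        (i = 3 ∧ j = 2) ∨ (i = 4 ∧ j = 1) ∨ (i = 5 ∧ j = 0) := by omega
    rcases hcases with ⟨hi, hj⟩ | ⟨hi, hj⟩ | ⟨hi, hj⟩ | ⟨hi, hj⟩ | ⟨hi, hj⟩ | ⟨hi, hj⟩ <;>
      subst hi <;> subst hj <;>
      simp only [Fin.val_zero, Fin.val_one, show ((2 : Fin 6) : ℕ) = 2 from rfl,
        show ((3 : Fin 6) : ℕ) = 3 from rfl, show ((4 : Fin 6) : ℕ) = 4 from rfl,
        show ((5 : Fin 6) : ℕ) = 5 from rfl] <;>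
      norm_num [e14, e23, e32, e41, e50]
  · -- c = 0 from Jacobi (Z 0, Z 5, Z 1)
    have h := leibniz_lie (Z 0) (Z 5) (Z 1)
    have h51 : lam 5 1 = 0 := part1 5 1 (by decide)
    have h01 : lam 0 1 = 0 := part1 0 1 (by decide)
    have hY1 : ⁅Y₀, Z 1⁆ = -(c • Z 1) := by
      rw [← neg_neg ⁅Y₀, Z 1⁆, lie_skew, hZY 1]
    rw [hZZ 5 1, hZZ 0 5, hZZ 0 1, lie_smul, smul_lie, lie_smul, hY1, hZY 5,
      h51, h01, zero_smul, zero_smul, add_zero,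
      smul_neg, smul_smul] at h
    -- h : 0 = -((lam 0 5 * c) • Z 1)
    have h' : (lam 0 5 * c) • Z 1 = 0 := by
      rw [← neg_eq_zero]; exact h.symm
    have hZ1 : Z 1 ≠ 0 := hZind.ne_zero 1
    rcases smul_eq_zero.mp h' with h'' | h''
    · rcases mul_eq_zero.mp h'' with h3 | h3
      · exact absurd h3 hlam
      · exact h3
    · exact absurd h'' hZ1
end
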